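/- If X is a subspace of ℝ of the form (a,b), (a,b] or [a,b] with a < b, then S_c(X) is contractible. -/

import Mathlib

open Set Topology

structure CL (X : Type*) [TopologicalSpace X] : Type _ where
  carrier : Set X
  isClosed' : IsClosed carrier
  nonempty' : carrier.Nonempty

def CL.box {X : Type*} [TopologicalSpace X] (𝒰 : Finset (Set X)) : Set (CL X) :=
  {A | A.carrier ⊆ ⋃₀ (𝒰 : Set (Set X)) ∧ ∀ U ∈ 𝒰, (A.carrier ∩ U).Nonempty}

instance CL.instTopologicalSpace (X : Type*) [TopologicalSpace X] :
    TopologicalSpace (CL X) :=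
  TopologicalSpace.generateFrom
    {s | ∃ 𝒰 : Finset (Set X), (∀ U ∈ 𝒰, IsOpen U) ∧ s = CL.box 𝒰}

def IsLimitOf {X : Type*} [TopologicalSpace X] (S : Set X) (p : X) : Prop :=
  p ∈ S ∧ ∀ U : Set X, IsOpen U → p ∈ U → (S \ U).Finite

def IsNontrivialConvergentSeq {X : Type*} [TopologicalSpace X] (S : Set X) : Prop :=
  S.Countable ∧ S.Infinite ∧ ∃ p, IsLimitOf S p

def Sc (X : Type*) [TopologicalSpace X] : Set (CL X) :=
  {A | IsNontrivialConvergentSeq A.carrier}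

/-! general auxiliary lemmas -/

lemma CL.ext' {X : Type*} [TopologicalSpace X] {A B : CL X}
    (h : A.carrier = B.carrier) : A = B := by
  cases A; cases B; simpa using h

lemma IsLimitOf.isCompact {X : Type*} [TopologicalSpace X] {S : Set X} {p : X}
    (h : IsLimitOf S p) : IsCompact S := by
  classical
  obtain ⟨hp, hfin⟩ := h
  rw [isCompact_iff_finite_subcover]
  intro ι U hU hcov
  obtain ⟨i₀, hi₀⟩ := mem_iUnion.1 (hcov hp)
  have hF : (S \ U i₀).Finite := hfin _ (hU i₀) hi₀
  have : ∀ x : ↥(S \ U i₀), ∃ i, (x : X) ∈ U i := by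
    intro x; exact mem_iUnion.1 (hcov x.2.1)
  choose f hf using this
  have : Fintype ↥(S \ U i₀) := hF.fintype
  refine ⟨insert i₀ (Finset.univ.image f), ?_⟩
  intro x hx
  by_cases hxU : x ∈ U i₀
  · exact mem_iUnion.2 ⟨i₀, mem_iUnion.2 ⟨Finset.mem_insert_self _ _, hxU⟩⟩
  · refine mem_iUnion.2 ⟨f ⟨x, hx, hxU⟩, mem_iUnion.2 ⟨?_, hf _⟩⟩
    exact Finset.mem_insert_of_mem (Finset.mem_image_of_mem f (Finset.mem_univ _))

lemma isOpen_CL_upper {X : Type*} [TopologicalSpace X] {W : Set X} (hW : IsOpen W) :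
    IsOpen {A : CL X | A.carrier ⊆ W} := by
  classical
  have : {A : CL X | A.carrier ⊆ W} = CL.box {W} := by
    ext A
    simp only [CL.box, mem_setOf_eq, Finset.coe_singleton, sUnion_singleton,
      Finset.mem_singleton]
    constructor
    · rintro hsub
      exact ⟨hsub, fun U hU => hU ▸ (by
        obtain ⟨x, hx⟩ := A.nonempty'
        exact ⟨x, hx, hsub hx⟩)⟩
    · rintro ⟨hsub, -⟩; exact hsub
  rw [this]
  exact TopologicalSpace.isOpen_generateFrom_of_mem
    ⟨{W}, by simpa using hW, rfl⟩

lemma isOpen_CL_lower {X : Type*} [TopologicalSpace X] {W : Set X} (hW : IsOpen W) :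
    IsOpen {A : CL X | (A.carrier ∩ W).Nonempty} := by
  classical
  have : {A : CL X | (A.carrier ∩ W).Nonempty} = CL.box {(univ : Set X), W} := by
    ext A
    simp only [CL.box, mem_setOf_eq, Finset.coe_insert, Finset.coe_singleton,
      Finset.mem_insert, Finset.mem_singleton]
    constructor
    · intro hne
      refine ⟨?_, ?_⟩
      · intro x hx; exact mem_sUnion.2 ⟨univ, by simp, trivial⟩
      · rintro U (rfl | rfl)
        · obtain ⟨x, hx⟩ := A.nonempty'; exact ⟨x, hx, trivial⟩
        · exact hne
    · rintro ⟨-, h⟩; exact h _ (Or.inr rfl)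
  rw [this]
  exact TopologicalSpace.isOpen_generateFrom_of_mem
    ⟨{univ, W}, by rintro U hU; simp at hU; rcases hU with rfl | rfl; exacts [isOpen_univ, hW], rfl⟩
/-! The contraction construction on ℝ-sets.

`c` is the center point, `d > 0` a scale.  `phi c t` squeezes everything towards `c`,
and `qf c d n M t` is the `n`-th escaping point (born at time `tB n` at the position
`phi c (tB n) M`, arriving at `pt c d n` at time `1`). -/

noncomputable section AuxReal

/-- the squeeze map -/
def phiR (c t x : ℝ) : ℝ := (1 - t) * x + t * c

/-- birth time of the `n`-th escaping point -/
def tBR (n : ℕ) : ℝ := 1 - (2:ℝ)⁻¹ ^ (n + 1)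

/-- final position of the `n`-th escaping point -/
def ptR (c d : ℝ) (n : ℕ) : ℝ := c + d * (2:ℝ)⁻¹ ^ (n + 1)

/-- the `n`-th escaping point at time `t`, when the original set had maximum `M` -/
def qfR (c d : ℝ) (n : ℕ) (M t : ℝ) : ℝ :=
  phiR c (tBR n) M + ((t - tBR n) * 2 ^ (n + 1)) * (ptR c d n - phiR c (tBR n) M)

/-- the full moving set -/
def HHR (c d : ℝ) (K : Set ℝ) (t : ℝ) : Set ℝ :=
  phiR c t '' K ∪ ⋃ n : ℕ, {x | tBR n ≤ t ∧ x = qfR c d n (sSup K) t}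

lemma tBR_lt_one (n : ℕ) : tBR n < 1 := by
  have : (0:ℝ) < (2:ℝ)⁻¹ ^ (n+1) := by positivity
  simp only [tBR]; linarith

lemma tBR_pos (n : ℕ) : 0 < tBR n := by
  have : (2:ℝ)⁻¹ ^ (n+1) ≤ (2:ℝ)⁻¹ ^ 1 :=
    pow_le_pow_of_le_one (by norm_num) (by norm_num) (by omega)
  simp only [tBR]; norm_num at this ⊢; linarith

lemma one_sub_tBR (n : ℕ) : 1 - tBR n = (2:ℝ)⁻¹ ^ (n+1) := by simp [tBR]

lemma tBR_strictMono : StrictMono tBR := by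
  intro m n hmn
  have : (2:ℝ)⁻¹ ^ (n+1) < (2:ℝ)⁻¹ ^ (m+1) :=
    pow_lt_pow_right_of_lt_one₀ (by norm_num) (by norm_num) (by omega)
  simp only [tBR]; linarith

/-- only finitely many escaping points are active before time `t < 1` -/
lemma active_finite {t : ℝ} (ht : t < 1) : {n : ℕ | tBR n ≤ t}.Finite := by
  obtain ⟨N, hN⟩ : ∃ n : ℕ, (2:ℝ)⁻¹ ^ n < 1 - t :=
    exists_pow_lt_of_lt_one (by linarith) (by norm_num)
  refine (finite_Iio N).subset ?_
  intro n hn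
  simp only [mem_setOf_eq] at hn
  by_contra hge
  simp only [mem_Iio, not_lt] at hge
  have h1 : (2:ℝ)⁻¹ ^ (n+1) ≤ (2:ℝ)⁻¹ ^ N :=
    pow_le_pow_of_le_one (by norm_num) (by norm_num) (by omega)
  have := one_sub_tBR n
  linarith

lemma qfR_at_tBR (c d : ℝ) (n : ℕ) (M : ℝ) : qfR c d n M (tBR n) = phiR c (tBR n) M := by
  simp [qfR]

lemma qfR_at_one (c d : ℝ) (n : ℕ) (M : ℝ) : qfR c d n M 1 = ptR c d n := by
  have h2 : ((1:ℝ) - tBR n) * 2 ^ (n+1) = 1 := by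
    rw [one_sub_tBR]
    rw [← mul_pow]
    norm_num
  simp only [qfR, h2, one_mul]
  ring

lemma phiR_zero (c x : ℝ) : phiR c 0 x = x := by simp [phiR]

lemma phiR_one (c x : ℝ) : phiR c 1 x = c := by simp [phiR]

lemma HHR_zero (c d : ℝ) (K : Set ℝ) : HHR c d K 0 = K := by
  have h1 : phiR c 0 '' K = K := by
    have : phiR c 0 = id := funext fun x => phiR_zero c x
    rw [this, image_id]
  have h2 : (⋃ n : ℕ, {x : ℝ | tBR n ≤ 0 ∧ x = qfR c d n (sSup K) 0}) = ∅ := by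
    refine iUnion_eq_empty.2 fun n => eq_empty_iff_forall_notMem.2 ?_
    rintro x ⟨hle, -⟩
    exact absurd hle (not_le.2 (tBR_pos n))
  rw [HHR, h1, h2, union_empty]

lemma HHR_one (c d : ℝ) {K : Set ℝ} (hK : K.Nonempty) :
    HHR c d K 1 = {c} ∪ range (ptR c d) := by
  have h1 : phiR c 1 '' K = {c} := by
    apply Subset.antisymm
    · rintro y ⟨x, -, rfl⟩; simp [phiR_one]
    · intro y hy
      rw [mem_singleton_iff] at hy
      obtain ⟨x, hx⟩ := hK
      exact ⟨x, hx, (phiR_one c x).trans hy.symm⟩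
  have h2 : (⋃ n : ℕ, {x : ℝ | tBR n ≤ 1 ∧ x = qfR c d n (sSup K) 1}) = range (ptR c d) := by
    ext x
    simp only [mem_iUnion, mem_setOf_eq, mem_range]
    constructor
    · rintro ⟨n, -, rfl⟩; exact ⟨n, (qfR_at_one c d n _).symm⟩
    · rintro ⟨n, rfl⟩; exact ⟨n, (tBR_lt_one n).le, (qfR_at_one c d n _).symm⟩
  rw [HHR, h1, h2]

end AuxReal
section AuxReal2

variable {c d R t M x : ℝ} {s K : Set ℝ} {n : ℕ}

lemma ptR_mem (hd : 0 < d) (hIcc : Icc c (c + d) ⊆ s) : ptR c d n ∈ s := by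
  refine hIcc ⟨?_, ?_⟩
  · have : (0:ℝ) < d * (2:ℝ)⁻¹ ^ (n+1) := by positivity
    simp only [ptR]; linarith
  · have h1 : (2:ℝ)⁻¹ ^ (n+1) ≤ 1 := by
      apply pow_le_one₀ <;> norm_num
    have : d * (2:ℝ)⁻¹ ^ (n+1) ≤ d * 1 := by
      apply mul_le_mul_of_nonneg_left h1 hd.le
    simp only [ptR]; linarith

lemma phiR_mem (hconv : Convex ℝ s) (hcs : c ∈ s) (hx : x ∈ s)
    (ht0 : 0 ≤ t) (ht1 : t ≤ 1) : phiR c t x ∈ s := by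
  have := hconv hx hcs (by linarith : (0:ℝ) ≤ 1 - t) ht0 (by ring)
  simpa [phiR, smul_eq_mul] using this

lemma lam_mem (htn : tBR n ≤ t) (ht1 : t ≤ 1) :
    0 ≤ (t - tBR n) * 2 ^ (n+1) ∧ (t - tBR n) * 2 ^ (n+1) ≤ 1 := by
  constructor
  · have : (0:ℝ) ≤ t - tBR n := by linarith
    positivity
  · have h := one_sub_tBR n
    have h2 : ((1:ℝ) - tBR n) * 2 ^ (n+1) = 1 := by
      rw [h, ← mul_pow]; norm_num
    nlinarith [pow_pos (by norm_num : (0:ℝ) < 2) (n+1)]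

lemma qfR_mem (hd : 0 < d) (hconv : Convex ℝ s) (hcs : c ∈ s) (hIcc : Icc c (c + d) ⊆ s)
    (hM : M ∈ s) (htn : tBR n ≤ t) (ht1 : t ≤ 1) : qfR c d n M t ∈ s := by
  obtain ⟨hl0, hl1⟩ := lam_mem htn ht1
  set lam := (t - tBR n) * 2 ^ (n+1) with hlam
  have hphi : phiR c (tBR n) M ∈ s := phiR_mem hconv hcs hM (tBR_pos n).le (tBR_lt_one n).le
  have hpt : ptR c d n ∈ s := ptR_mem hd hIcc
  have := hconv hphi hpt (by linarith : (0:ℝ) ≤ 1 - lam) hl0 (by ring)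
  have heq : qfR c d n M t = (1 - lam) • phiR c (tBR n) M + lam • ptR c d n := by
    simp only [smul_eq_mul, qfR, ← hlam]; ring
  rw [heq]; exact this

lemma phiR_sub_c : phiR c t x - c = (1 - t) * (x - c) := by simp [phiR]; ring

lemma phiR_close_c (hx : |x - c| ≤ R) (ht0 : 0 ≤ t) (ht1 : t ≤ 1) :
    |phiR c t x - c| ≤ (1 - t) * R := by
  rw [phiR_sub_c, abs_mul, abs_of_nonneg (by linarith : (0:ℝ) ≤ 1 - t)]
  exact mul_le_mul_of_nonneg_left hx (by linarith)

lemma phiR_tBR_close_c (hx : |x - c| ≤ R) : |phiR c (tBR n) x - c| ≤ (2:ℝ)⁻¹ ^ (n+1) * R := by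
  have := phiR_close_c (t := tBR n) hx (tBR_pos n).le (tBR_lt_one n).le
  rwa [one_sub_tBR n] at this

lemma ptR_sub_c : ptR c d n - c = d * (2:ℝ)⁻¹ ^ (n+1) := by simp [ptR]

lemma ptR_close_c (hd : 0 ≤ d) (hdR : d ≤ R) : |ptR c d n - c| ≤ (2:ℝ)⁻¹ ^ (n+1) * R := by
  rw [ptR_sub_c, abs_of_nonneg (by positivity)]
  have : (0:ℝ) ≤ (2:ℝ)⁻¹ ^ (n+1) := by positivity
  nlinarith

/-- every active escaping point stays `2⁻¹ ^ (n+1) * R`-close to `c` -/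
lemma qfR_close_c (hd : 0 ≤ d) (hdR : d ≤ R) (hM : |M - c| ≤ R)
    (htn : tBR n ≤ t) (ht1 : t ≤ 1) : |qfR c d n M t - c| ≤ (2:ℝ)⁻¹ ^ (n+1) * R := by
  obtain ⟨hl0, hl1⟩ := lam_mem htn ht1
  set lam := (t - tBR n) * 2 ^ (n+1) with hlam
  have h1 : |phiR c (tBR n) M - c| ≤ (2:ℝ)⁻¹ ^ (n+1) * R := phiR_tBR_close_c hM
  have h2 : |ptR c d n - c| ≤ (2:ℝ)⁻¹ ^ (n+1) * R := ptR_close_c hd hdR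
  have heq : qfR c d n M t - c = (1 - lam) * (phiR c (tBR n) M - c) + lam * (ptR c d n - c) := by
    simp only [qfR, ← hlam]; ring
  rw [heq]
  calc |(1 - lam) * (phiR c (tBR n) M - c) + lam * (ptR c d n - c)|
      ≤ |(1 - lam) * (phiR c (tBR n) M - c)| + |lam * (ptR c d n - c)| := abs_add_le _ _
    _ = (1 - lam) * |phiR c (tBR n) M - c| + lam * |ptR c d n - c| := by
        rw [abs_mul, abs_mul, abs_of_nonneg (by linarith), abs_of_nonneg hl0]
    _ ≤ (1 - lam) * ((2:ℝ)⁻¹ ^ (n+1) * R) + lam * ((2:ℝ)⁻¹ ^ (n+1) * R) := by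
        have := mul_le_mul_of_nonneg_left h1 (by linarith : (0:ℝ) ≤ 1 - lam)
        have := mul_le_mul_of_nonneg_left h2 hl0
        linarith
    _ = (2:ℝ)⁻¹ ^ (n+1) * R := by ring

/-- near time `1`, the `n`-th escaping point is near its final position -/
lemma qfR_close_pt (hd : 0 ≤ d) (hdR : d ≤ R) (hR0 : 0 ≤ R) (hM : |M - c| ≤ R) (ht1 : t ≤ 1) :
    |qfR c d n M t - ptR c d n| ≤ 2 ^ (n+1) * (1 - t) * (2 * R) := by
  have h1 : |phiR c (tBR n) M - c| ≤ (2:ℝ)⁻¹ ^ (n+1) * R := phiR_tBR_close_c hM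
  have h2 : |ptR c d n - c| ≤ (2:ℝ)⁻¹ ^ (n+1) * R := ptR_close_c hd hdR
  have hpow : (2:ℝ)⁻¹ ^ (n+1) ≤ 1 := by apply pow_le_one₀ <;> norm_num
  have h3 : |phiR c (tBR n) M - ptR c d n| ≤ 2 * R := by
    have := abs_sub (phiR c (tBR n) M - c) (ptR c d n - c)
    have h4 : |phiR c (tBR n) M - ptR c d n| ≤ |phiR c (tBR n) M - c| + |ptR c d n - c| := by
      calc |phiR c (tBR n) M - ptR c d n| = |(phiR c (tBR n) M - c) - (ptR c d n - c)| := by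
            ring_nf
        _ ≤ _ := abs_sub _ _
    nlinarith [pow_nonneg (by norm_num : (0:ℝ) ≤ 2⁻¹) (n+1)]
  have hlam1 : ((1:ℝ) - tBR n) * 2 ^ (n+1) = 1 := by
    rw [one_sub_tBR, ← mul_pow]; norm_num
  have heq : qfR c d n M t - ptR c d n
      = (2 ^ (n+1) * (1 - t)) * (phiR c (tBR n) M - ptR c d n) := by
    simp only [qfR]
    linear_combination (ptR c d n - phiR c (tBR n) M) * hlam1
  rw [heq, abs_mul]
  have hnn : (0:ℝ) ≤ 2 ^ (n+1) * (1 - t) :=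
    mul_nonneg (by positivity) (by linarith)
  rw [abs_of_nonneg hnn]
  calc 2 ^ (n+1) * (1 - t) * |phiR c (tBR n) M - ptR c d n|
      ≤ 2 ^ (n+1) * (1 - t) * (2 * R) := mul_le_mul_of_nonneg_left h3 hnn
    _ = _ := by ring

lemma phiR_injective (ht : t < 1) : Function.Injective (phiR c t) := by
  intro x y h
  simp only [phiR] at h
  have h1 : (1:ℝ) - t ≠ 0 := by linarith
  have := mul_left_cancel₀ h1 (by linarith : (1 - t) * x = (1 - t) * y)
  exact this

lemma ptR_injective (hd : 0 < d) : Function.Injective (ptR c d) := by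
  intro m n h
  simp only [ptR, add_right_inj] at h
  have h2 := mul_left_cancel₀ hd.ne' h
  rcases lt_trichotomy m n with hmn | hmn | hmn
  · have := pow_lt_pow_right_of_lt_one₀ (by norm_num : (0:ℝ) < 2⁻¹) (by norm_num)
      (by omega : m + 1 < n + 1)
    rw [h2] at this; linarith
  · exact hmn
  · have := pow_lt_pow_right_of_lt_one₀ (by norm_num : (0:ℝ) < 2⁻¹) (by norm_num)
      (by omega : n + 1 < m + 1)
    rw [h2] at this; linarith

end AuxReal2
section AuxReal3

lemma IsLimitOf.image {X Y : Type*} [TopologicalSpace X] [TopologicalSpace Y]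
    {S : Set X} {p : X} {f : X → Y} (h : IsLimitOf S p) (hf : Continuous f) :
    IsLimitOf (f '' S) (f p) := by
  refine ⟨mem_image_of_mem f h.1, fun U hU hpU => ?_⟩
  have hfin := h.2 (f ⁻¹' U) (hU.preimage hf) hpU
  refine (hfin.image f).subset ?_
  rintro y ⟨⟨x, hx, rfl⟩, hyU⟩
  exact ⟨x, ⟨hx, hyU⟩, rfl⟩

lemma IsLimitOf.union_finite {X : Type*} [TopologicalSpace X]
    {S F : Set X} {p : X} (h : IsLimitOf S p) (hF : F.Finite) :
    IsLimitOf (S ∪ F) p := by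
  refine ⟨Or.inl h.1, fun U hU hpU => ?_⟩
  rw [union_diff_distrib]
  exact (h.2 U hU hpU).union (hF.subset diff_subset)

variable {c d R t M p : ℝ} {s K : Set ℝ} {n : ℕ}

/-- the set of active escaping points -/
lemma Qset_subset (c d M t : ℝ) :
    (⋃ n : ℕ, {x : ℝ | tBR n ≤ t ∧ x = qfR c d n M t})
      ⊆ (fun n => qfR c d n M t) '' {n : ℕ | tBR n ≤ t} := by
  intro x hx
  obtain ⟨n, htn, rfl⟩ := mem_iUnion.1 hx
  exact ⟨n, htn, rfl⟩

lemma Qset_finite (c d M : ℝ) (ht : t < 1) :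
    (⋃ n : ℕ, {x : ℝ | tBR n ≤ t ∧ x = qfR c d n M t}).Finite :=
  (((active_finite ht).image _).subset (Qset_subset c d M t))

lemma Qset_countable (c d M t : ℝ) :
    (⋃ n : ℕ, {x : ℝ | tBR n ≤ t ∧ x = qfR c d n M t}).Countable :=
  (countable_range (fun n => qfR c d n M t)).mono
    ((Qset_subset c d M t).trans (image_subset_range _ _))

lemma HHR_subset (hd : 0 < d) (hconv : Convex ℝ s) (hcs : c ∈ s)
    (hIcc : Icc c (c + d) ⊆ s) (hKs : K ⊆ s) (hMK : sSup K ∈ K)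
    (ht0 : 0 ≤ t) (ht1 : t ≤ 1) : HHR c d K t ⊆ s := by
  rintro x (⟨y, hy, rfl⟩ | hx)
  · exact phiR_mem hconv hcs (hKs hy) ht0 ht1
  · obtain ⟨n, htn, rfl⟩ := mem_iUnion.1 hx
    exact qfR_mem hd hconv hcs hIcc (hKs hMK) htn ht1

lemma HHR_countable (hKc : K.Countable) : (HHR c d K t).Countable :=
  (hKc.image _).union (Qset_countable c d (sSup K) t)

lemma HHR_nonempty (hK : K.Nonempty) : (HHR c d K t).Nonempty := by
  obtain ⟨x, hx⟩ := hK
  exact ⟨phiR c t x, Or.inl ⟨x, hx, rfl⟩⟩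

lemma HHR_infinite (hd : 0 < d) (hKi : K.Infinite) (ht1 : t ≤ 1) :
    (HHR c d K t).Infinite := by
  rcases lt_or_eq_of_le ht1 with ht | rfl
  · exact ((hKi.image ((phiR_injective ht).injOn)).mono subset_union_left)
  · rw [HHR_one c d hKi.nonempty]
    exact ((infinite_range_of_injective (ptR_injective hd)).mono subset_union_right)

lemma pt_far_finite (hd : 0 < d) {ε : ℝ} (hε : 0 < ε) :
    {n : ℕ | ε ≤ d * (2:ℝ)⁻¹ ^ (n+1)}.Finite := by
  obtain ⟨N, hN⟩ : ∃ m : ℕ, (2:ℝ)⁻¹ ^ m < ε / d :=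
    exists_pow_lt_of_lt_one (by positivity) (by norm_num)
  refine (finite_Iio N).subset ?_
  intro n hn
  simp only [mem_setOf_eq] at hn
  by_contra hge
  simp only [mem_Iio, not_lt] at hge
  have h1 : (2:ℝ)⁻¹ ^ (n+1) ≤ (2:ℝ)⁻¹ ^ N :=
    pow_le_pow_of_le_one (by norm_num) (by norm_num) (by omega)
  have h2 : d * (2:ℝ)⁻¹ ^ (n+1) ≤ d * (2:ℝ)⁻¹ ^ N := by nlinarith
  have h3 : d * (2:ℝ)⁻¹ ^ N < ε := by
    have := (lt_div_iff₀ hd).1 hN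
    linarith
  linarith

lemma isLimitOf_P (hd : 0 < d) : IsLimitOf ({c} ∪ range (ptR c d)) c := by
  refine ⟨Or.inl rfl, fun U hU hcU => ?_⟩
  obtain ⟨ε, hε, hball⟩ := Metric.isOpen_iff.1 hU c hcU
  have hsub : ({c} ∪ range (ptR c d)) \ U
      ⊆ ptR c d '' {n : ℕ | ε ≤ d * (2:ℝ)⁻¹ ^ (n+1)} := by
    rintro x ⟨hx | ⟨n, rfl⟩, hxU⟩
    · rw [mem_singleton_iff] at hx
      exact absurd (hball (by simp [hx, Metric.mem_ball, hε])) hxU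
    · refine ⟨n, ?_, rfl⟩
      simp only [mem_setOf_eq]
      by_contra hlt
      push_neg at hlt
      apply hxU
      apply hball
      simp only [Metric.mem_ball, Real.dist_eq]
      calc |ptR c d n - c| = d * (2:ℝ)⁻¹ ^ (n+1) := by
            rw [ptR_sub_c, abs_of_nonneg (by positivity)]
        _ < ε := hlt
  exact (((pt_far_finite hd hε).image _).subset hsub)

lemma HHR_isLimitOf_lt (hp : IsLimitOf K p) (ht : t < 1) :
    IsLimitOf (HHR c d K t) (phiR c t p) := by
  have hcont : Continuous (phiR c t) := by
    have h : phiR c t = fun x => (1 - t) * x + t * c := rfl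
    rw [h]; fun_prop
  exact (hp.image hcont).union_finite (Qset_finite c d (sSup K) ht)

lemma HHR_isLimitOf (hd : 0 < d) (hK : K.Nonempty) (hp : IsLimitOf K p) (ht1 : t ≤ 1) :
    IsLimitOf (HHR c d K t) (phiR c t p) := by
  rcases lt_or_eq_of_le ht1 with ht | rfl
  · exact HHR_isLimitOf_lt hp ht
  · rw [HHR_one c d hK, phiR_one]
    exact isLimitOf_P hd

end AuxReal3
section AuxSubtype

variable {s : Set ℝ}

/-- the real carrier of an element of `CL ↥s` -/
def KofZ (z : CL ↥s) : Set ℝ := Subtype.val '' z.carrier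

lemma KofZ_subset (z : CL ↥s) : KofZ z ⊆ s := by
  rintro x ⟨y, -, rfl⟩; exact y.2

lemma KofZ_nonempty (z : CL ↥s) : (KofZ z).Nonempty := z.nonempty'.image _

lemma KofZ_countable {z : CL ↥s} (hz : z ∈ Sc ↥s) : (KofZ z).Countable :=
  hz.1.image _

lemma KofZ_infinite {z : CL ↥s} (hz : z ∈ Sc ↥s) : (KofZ z).Infinite :=
  hz.2.1.image (Subtype.val_injective.injOn)

lemma KofZ_limit {z : CL ↥s} (hz : z ∈ Sc ↥s) :
    ∃ p : ℝ, p ∈ s ∧ IsLimitOf (KofZ z) p := by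
  obtain ⟨p, hp⟩ := hz.2.2
  exact ⟨p, p.2, hp.image continuous_subtype_val⟩

lemma KofZ_sSup_mem {z : CL ↥s} (hz : z ∈ Sc ↥s) : sSup (KofZ z) ∈ KofZ z := by
  obtain ⟨p, -, hp⟩ := KofZ_limit hz
  exact hp.isCompact.sSup_mem (KofZ_nonempty z)

lemma preimage_isClosed {H : Set ℝ} (q : ℝ) (hlim : IsLimitOf H q) :
    IsClosed (Subtype.val ⁻¹' H : Set ↥s) :=
  hlim.isCompact.isClosed.preimage continuous_subtype_val

lemma preimage_nonempty {H : Set ℝ} (hHs : H ⊆ s) (hne : H.Nonempty) :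
    (Subtype.val ⁻¹' H : Set ↥s).Nonempty := by
  obtain ⟨x, hx⟩ := hne
  exact ⟨⟨x, hHs hx⟩, hx⟩

lemma preimage_isNCS {H : Set ℝ} (hHs : H ⊆ s) (hcnt : H.Countable) (hinf : H.Infinite)
    {q : ℝ} (hqs : q ∈ s) (hlim : IsLimitOf H q) :
    IsNontrivialConvergentSeq (Subtype.val ⁻¹' H : Set ↥s) := by
  refine ⟨hcnt.preimage Subtype.val_injective, ?_, ⟨q, hqs⟩, hlim.1, ?_⟩
  · have himg : Subtype.val '' (Subtype.val ⁻¹' H : Set ↥s) = H := by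
      rw [Subtype.image_preimage_coe]
      exact inter_eq_self_of_subset_right hHs
    intro hfin
    exact hinf (himg ▸ hfin.image _)
  · intro V hV hqV
    obtain ⟨U, hU, rfl⟩ := isOpen_induced_iff.1 hV
    have hfin : (H \ U).Finite := hlim.2 U hU hqV
    have : (Subtype.val ⁻¹' H \ Subtype.val ⁻¹' U : Set ↥s)
        = Subtype.val ⁻¹' (H \ U) := by
      ext x; simp [mem_diff]
    rw [this]
    exact hfin.preimage (Subtype.val_injective.injOn)

end AuxSubtype
section Continuity

variable {s : Set ℝ} {c d R : ℝ}

lemma isOpen_Sc_upper {W : Set ℝ} (hW : IsOpen W) :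
    IsOpen {z : ↥(Sc ↥s) | KofZ z.1 ⊆ W} := by
  have h1 : IsOpen {A : CL ↥s | A.carrier ⊆ Subtype.val ⁻¹' W} :=
    isOpen_CL_upper (hW.preimage continuous_subtype_val)
  have h2 : {z : ↥(Sc ↥s) | KofZ z.1 ⊆ W}
      = Subtype.val ⁻¹' {A : CL ↥s | A.carrier ⊆ Subtype.val ⁻¹' W} := by
    ext z
    simp only [mem_setOf_eq, mem_preimage, KofZ, image_subset_iff]
  rw [h2]
  exact h1.preimage continuous_subtype_val

lemma isOpen_Sc_lower {W : Set ℝ} (hW : IsOpen W) :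
    IsOpen {z : ↥(Sc ↥s) | (KofZ z.1 ∩ W).Nonempty} := by
  have h1 : IsOpen {A : CL ↥s | (A.carrier ∩ Subtype.val ⁻¹' W).Nonempty} :=
    isOpen_CL_lower (hW.preimage continuous_subtype_val)
  have h2 : {z : ↥(Sc ↥s) | (KofZ z.1 ∩ W).Nonempty}
      = Subtype.val ⁻¹' {A : CL ↥s | (A.carrier ∩ Subtype.val ⁻¹' W).Nonempty} := by
    ext z
    simp only [mem_setOf_eq, mem_preimage]
    constructor
    · rintro ⟨x, ⟨y, hy, rfl⟩, hxW⟩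
      exact ⟨y, hy, hxW⟩
    · rintro ⟨y, hy, hyW⟩
      exact ⟨↑y, ⟨y, hy, rfl⟩, hyW⟩
  rw [h2]
  exact h1.preimage continuous_subtype_val

lemma continuous_sSupK (hbd : BddAbove s) :
    Continuous fun z : ↥(Sc ↥s) => sSup (KofZ z.1) := by
  rw [continuous_iff_continuousAt]
  intro z₀
  rw [ContinuousAt, Metric.tendsto_nhds]
  intro ε hε
  set M₀ := sSup (KofZ z₀.1) with hM₀
  have hbdK : ∀ z : ↥(Sc ↥s), BddAbove (KofZ z.1) := fun z => hbd.mono (KofZ_subset _)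
  have hM₀mem : M₀ ∈ KofZ z₀.1 := KofZ_sSup_mem z₀.2
  have hopen : IsOpen ({z : ↥(Sc ↥s) | (KofZ z.1 ∩ Metric.ball M₀ (ε/2)).Nonempty}
      ∩ {z | KofZ z.1 ⊆ Iio (M₀ + ε/2)}) :=
    (isOpen_Sc_lower Metric.isOpen_ball).inter (isOpen_Sc_upper isOpen_Iio)
  have hmem : z₀ ∈ {z : ↥(Sc ↥s) | (KofZ z.1 ∩ Metric.ball M₀ (ε/2)).Nonempty}
      ∩ {z | KofZ z.1 ⊆ Iio (M₀ + ε/2)} := by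
    constructor
    · exact ⟨M₀, hM₀mem, by simp [Metric.mem_ball, hε]⟩
    · intro x hx
      have hle := le_csSup (hbdK z₀) hx
      simp only [mem_Iio]
      linarith
  filter_upwards [hopen.mem_nhds hmem] with z hz
  obtain ⟨⟨x, hxK, hxball⟩, hsub⟩ := hz
  have h1 : sSup (KofZ z.1) ≤ M₀ + ε/2 :=
    csSup_le (KofZ_nonempty _) fun y hy => (le_of_lt (hsub hy))
  have h2 : x ≤ sSup (KofZ z.1) := le_csSup (hbdK z) hxK
  rw [Real.dist_eq, abs_sub_lt_iff]
  rw [Metric.mem_ball, Real.dist_eq, abs_sub_lt_iff] at hxball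
  constructor <;> linarith [hxball.1, hxball.2]

lemma continuous_qfR_pair (c d : ℝ) (n : ℕ) :
    Continuous fun p : ℝ × ℝ => qfR c d n p.1 p.2 := by
  unfold qfR phiR ptR
  fun_prop

lemma continuous_qw (hbd : BddAbove s) (n : ℕ) :
    Continuous fun w : ↥(Sc ↥s) × unitInterval =>
      qfR c d n (sSup (KofZ w.1.1)) ↑w.2 :=
  (continuous_qfR_pair c d n).comp
    (((continuous_sSupK hbd).comp continuous_fst).prodMk
      (continuous_subtype_val.comp continuous_snd))

lemma continuous_tw :
    Continuous fun w : ↥(Sc ↥s) × unitInterval => (↑w.2 : ℝ) :=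
  continuous_subtype_val.comp continuous_snd

/-- lower semicontinuity of the moving set -/
lemma isOpen_lowerHH (hbd : BddAbove s) {W : Set ℝ} (hW : IsOpen W) :
    IsOpen {w : ↥(Sc ↥s) × unitInterval |
      (HHR c d (KofZ w.1.1) ↑w.2 ∩ W).Nonempty} := by
  set E1 : Set (↥(Sc ↥s) × unitInterval) :=
    {w | ∃ x ∈ KofZ w.1.1, phiR c ↑w.2 x ∈ W} with hE1
  set F : ℕ → Set (↥(Sc ↥s) × unitInterval) :=
    fun n => {w | tBR n < ↑w.2 ∧ qfR c d n (sSup (KofZ w.1.1)) ↑w.2 ∈ W} with hF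
  have hdecomp : {w : ↥(Sc ↥s) × unitInterval |
      (HHR c d (KofZ w.1.1) ↑w.2 ∩ W).Nonempty} = E1 ∪ ⋃ n, F n := by
    ext w
    simp only [mem_setOf_eq, hE1, hF, mem_union, mem_iUnion]
    constructor
    · rintro ⟨x, hx, hxW⟩
      rcases hx with ⟨y, hy, rfl⟩ | hx
      · exact Or.inl ⟨y, hy, hxW⟩
      · obtain ⟨n, htn, rfl⟩ := mem_iUnion.1 hx
        rcases lt_or_eq_of_le htn with hlt | heq
        · exact Or.inr ⟨n, hlt, hxW⟩
        · left
          refine ⟨sSup (KofZ w.1.1), KofZ_sSup_mem w.1.2, ?_⟩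
          rwa [← heq, qfR_at_tBR, heq] at hxW
    · rintro (⟨x, hx, hxW⟩ | ⟨n, hlt, hqW⟩)
      · exact ⟨phiR c ↑w.2 x, Or.inl ⟨x, hx, rfl⟩, hxW⟩
      · exact ⟨qfR c d n (sSup (KofZ w.1.1)) ↑w.2,
          Or.inr (mem_iUnion.2 ⟨n, hlt.le, rfl⟩), hqW⟩
  rw [hdecomp]
  refine IsOpen.union ?_ (isOpen_iUnion fun n => ?_)
  · -- openness of E1
    rw [isOpen_iff_forall_mem_open]
    rintro ⟨z₀, t₀⟩ ⟨x₀, hx₀, hφW⟩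
    obtain ⟨ε, hε, hball⟩ := Metric.isOpen_iff.1 hW _ hφW
    set δ := min (ε / 2) (ε / (2 * (|x₀ - c| + 1))) with hδ
    have hδpos : 0 < δ := by
      apply lt_min (by linarith)
      have : 0 < |x₀ - c| + 1 := by positivity
      positivity
    refine ⟨{w | (KofZ w.1.1 ∩ Metric.ball x₀ δ).Nonempty}
        ∩ {w | dist (↑w.2 : ℝ) ↑t₀ < δ}, ?_, ?_, ?_⟩
    · rintro ⟨z, t⟩ ⟨⟨x, hxK, hxball⟩, htd⟩
      refine ⟨x, hxK, hball ?_⟩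
      simp only [Metric.mem_ball, Real.dist_eq] at hxball htd ⊢
      have hb1 : |phiR c ↑t x - phiR c ↑t₀ x₀|
          ≤ |1 - (↑t:ℝ)| * |x - x₀| + |(↑t:ℝ) - ↑t₀| * |x₀ - c| := by
        have heq : phiR c ↑t x - phiR c ↑t₀ x₀
            = (1 - (↑t:ℝ)) * (x - x₀) + ((↑t₀:ℝ) - ↑t) * (x₀ - c) := by
          simp only [phiR]; ring
        rw [heq]
        calc |(1 - (↑t:ℝ)) * (x - x₀) + ((↑t₀:ℝ) - ↑t) * (x₀ - c)|
            ≤ |(1 - (↑t:ℝ)) * (x - x₀)| + |((↑t₀:ℝ) - ↑t) * (x₀ - c)| := abs_add_le _ _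
          _ = |1 - (↑t:ℝ)| * |x - x₀| + |(↑t₀:ℝ) - ↑t| * |x₀ - c| := by
              rw [abs_mul, abs_mul]
          _ = _ := by rw [abs_sub_comm (↑t₀:ℝ) ↑t]
      have ht1 : |1 - (↑t:ℝ)| ≤ 1 := by
        rw [abs_le]; constructor <;> [linarith [t.2.2]; linarith [t.2.1]]
      have hxc : (0:ℝ) ≤ |x₀ - c| := abs_nonneg _
      have k1 : |1 - (↑t:ℝ)| * |x - x₀| ≤ |x - x₀| := by
        nlinarith [abs_nonneg (x - x₀)]
      have htd' : |(↑t:ℝ) - ↑t₀| < δ := htd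
      have k2 : |(↑t:ℝ) - ↑t₀| * |x₀ - c| < δ * (|x₀ - c| + 1) := by
        have h0 := abs_nonneg ((↑t:ℝ) - ↑t₀)
        nlinarith
      have k3 : δ * (|x₀ - c| + 1) ≤ ε / 2 := by
        have hA : (0:ℝ) < |x₀ - c| + 1 := by positivity
        have h4 : δ ≤ ε / (2 * (|x₀ - c| + 1)) := min_le_right _ _
        have h5 : δ * (|x₀ - c| + 1) ≤ (ε / (2 * (|x₀ - c| + 1))) * (|x₀ - c| + 1) :=
          mul_le_mul_of_nonneg_right h4 hA.le
        have heq2 : (ε / (2 * (|x₀ - c| + 1))) * (|x₀ - c| + 1) = ε / 2 := by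
          field_simp
        linarith
      have k4 : |x - x₀| < δ := hxball
      have k5 : δ ≤ ε / 2 := min_le_left _ _
      calc |phiR c ↑t x - phiR c ↑t₀ x₀| ≤ |1 - (↑t:ℝ)| * |x - x₀| + |(↑t:ℝ) - ↑t₀| * |x₀ - c| := hb1
        _ < ε := by linarith
    · refine IsOpen.inter
        ((isOpen_Sc_lower Metric.isOpen_ball).preimage continuous_fst) ?_
      have heq : {w : ↥(Sc ↥s) × unitInterval | dist (↑w.2 : ℝ) ↑t₀ < δ}
          = (fun w : ↥(Sc ↥s) × unitInterval => (↑w.2 : ℝ)) ⁻¹' Metric.ball ↑t₀ δ := by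
        ext w; simp [Metric.mem_ball]
      rw [heq]
      exact Metric.isOpen_ball.preimage continuous_tw
    · exact ⟨⟨x₀, hx₀, by simp [Metric.mem_ball, hδpos]⟩, by simp [hδpos]⟩
  · -- openness of F n
    have heq : F n = (fun w : ↥(Sc ↥s) × unitInterval => (↑w.2 : ℝ)) ⁻¹' Ioi (tBR n)
        ∩ (fun w : ↥(Sc ↥s) × unitInterval =>
            qfR c d n (sSup (KofZ w.1.1)) ↑w.2) ⁻¹' W := by
      ext w; simp [hF, mem_Ioi, and_comm]
    rw [heq]
    exact (isOpen_Ioi.preimage continuous_tw).inter (hW.preimage (continuous_qw hbd n))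

end Continuity
section Upper

variable {s : Set ℝ} {c d R : ℝ}

lemma mem_HHR_img {K : Set ℝ} {t x : ℝ} (hx : x ∈ K) :
    phiR c t x ∈ HHR c d K t := Or.inl ⟨x, hx, rfl⟩

lemma mem_HHR_q {K : Set ℝ} {t : ℝ} {n : ℕ} (h : tBR n ≤ t) :
    qfR c d n (sSup K) t ∈ HHR c d K t := Or.inr (mem_iUnion.2 ⟨n, h, rfl⟩)

/-- upper semicontinuity of the moving set -/
lemma isOpen_upperHH (hd : 0 < d) (hR0 : 0 < R) (hdR : d ≤ R)
    (hbd : BddAbove s) (hRs : ∀ x ∈ s, |x - c| ≤ R) {W : Set ℝ} (hW : IsOpen W) :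
    IsOpen {w : ↥(Sc ↥s) × unitInterval | HHR c d (KofZ w.1.1) ↑w.2 ⊆ W} := by
  rw [isOpen_iff_forall_mem_open]
  rintro ⟨z₀, t₀⟩ h₀
  simp only [mem_setOf_eq] at h₀
  have hMmem : ∀ z : ↥(Sc ↥s), sSup (KofZ z.1) ∈ KofZ z.1 := fun z => KofZ_sSup_mem z.2
  have hMR : ∀ z : ↥(Sc ↥s), |sSup (KofZ z.1) - c| ≤ R :=
    fun z => hRs _ (KofZ_subset _ (hMmem z))
  rcases lt_or_eq_of_le t₀.2.2 with ht₀ | ht₀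
  · -- case t₀ < 1
    obtain ⟨p₀, hp₀s, hp₀⟩ := KofZ_limit z₀.2
    have hK₀cpt : IsCompact (KofZ z₀.1) := hp₀.isCompact
    set Ω : Set (ℝ × ℝ) := {pr | phiR c pr.2 pr.1 ∈ W} with hΩdef
    have hΩ : IsOpen Ω := by
      have hcont : Continuous fun pr : ℝ × ℝ => phiR c pr.2 pr.1 := by
        unfold phiR; fun_prop
      exact hW.preimage hcont
    have hsub : KofZ z₀.1 ×ˢ ({(↑t₀ : ℝ)} : Set ℝ) ⊆ Ω := by
      rintro ⟨x, u⟩ ⟨hx, hu⟩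
      rw [mem_singleton_iff] at hu
      subst hu
      exact h₀ (mem_HHR_img hx)
    obtain ⟨u, v, hu, hv, hKu, htv, huv⟩ :=
      generalized_tube_lemma hK₀cpt isCompact_singleton hΩ hsub
    obtain ⟨N, hN⟩ : ∃ m : ℕ, (2:ℝ)⁻¹ ^ m < 1 - ↑t₀ :=
      exists_pow_lt_of_lt_one (by linarith) (by norm_num)
    have htBN : (↑t₀ : ℝ) < tBR N := by
      have : (2:ℝ)⁻¹ ^ (N+1) ≤ (2:ℝ)⁻¹ ^ N :=
        pow_le_pow_of_le_one (by norm_num) (by norm_num) (by omega)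
      simp only [tBR]; linarith
    refine ⟨{w : ↥(Sc ↥s) × unitInterval | KofZ w.1.1 ⊆ u}
        ∩ ((fun w : ↥(Sc ↥s) × unitInterval => (↑w.2 : ℝ)) ⁻¹' v)
        ∩ ((fun w : ↥(Sc ↥s) × unitInterval => (↑w.2 : ℝ)) ⁻¹' Iio (tBR N))
        ∩ ⋂ n ∈ Finset.range N,
          (((fun w : ↥(Sc ↥s) × unitInterval => (↑w.2 : ℝ)) ⁻¹' Iio (tBR n))
            ∪ ((fun w : ↥(Sc ↥s) × unitInterval =>
                qfR c d n (sSup (KofZ w.1.1)) ↑w.2) ⁻¹' W)), ?_, ?_, ?_⟩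
    · rintro ⟨z, t⟩ ⟨⟨⟨hzu, htvmem⟩, htN⟩, hq⟩
      simp only [mem_preimage] at htvmem
      simp only [mem_setOf_eq] at hzu
      simp only [mem_setOf_eq]
      rintro x (⟨y, hy, rfl⟩ | hx)
      · have hyu : y ∈ u := hzu hy
        have : ((y, (↑t : ℝ)) : ℝ × ℝ) ∈ u ×ˢ v := ⟨hyu, htvmem⟩
        exact huv this
      · obtain ⟨n, htn, rfl⟩ := mem_iUnion.1 hx
        simp only [mem_preimage, mem_Iio] at htN
        have hnN : n < N := by
          have h1 : tBR n < tBR N := lt_of_le_of_lt htn htN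
          exact tBR_strictMono.lt_iff_lt.1 h1
        have := mem_iInter.1 (mem_iInter.1 hq n) (Finset.mem_range.2 hnN)
        rcases this with hlt | hmem
        · simp only [mem_preimage, mem_Iio] at hlt
          exact absurd htn (not_le.2 hlt)
        · exact hmem
    · refine IsOpen.inter (IsOpen.inter (IsOpen.inter ?_ ?_) ?_) ?_
      · exact (isOpen_Sc_upper hu).preimage continuous_fst
      · exact hv.preimage continuous_tw
      · exact isOpen_Iio.preimage continuous_tw
      · refine isOpen_biInter_finset fun n _ => IsOpen.union ?_ ?_
        · exact isOpen_Iio.preimage continuous_tw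
        · exact hW.preimage (continuous_qw hbd n)
    · refine ⟨⟨⟨hKu, htv rfl⟩, htBN⟩, ?_⟩
      refine mem_iInter.2 fun n => mem_iInter.2 fun _ => ?_
      by_cases hn : tBR n ≤ ↑t₀
      · exact Or.inr (h₀ (mem_HHR_q hn))
      · exact Or.inl (by simpa [mem_Iio] using not_le.1 hn)
  · -- case t₀ = 1
    have hP : {c} ∪ range (ptR c d) ⊆ W := by
      have := HHR_one c d (KofZ_nonempty z₀.1)
      rw [← this, ← ht₀]
      exact h₀
    have hcW : c ∈ W := hP (Or.inl rfl)
    have hptW : ∀ n, ptR c d n ∈ W := fun n => hP (Or.inr ⟨n, rfl⟩)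
    obtain ⟨ε, hε, hball⟩ := Metric.isOpen_iff.1 hW c hcW
    obtain ⟨N, hN⟩ : ∃ m : ℕ, (2:ℝ)⁻¹ ^ m < ε / R :=
      exists_pow_lt_of_lt_one (by positivity) (by norm_num)
    have hNR : (2:ℝ)⁻¹ ^ N * R < ε := by
      rw [← lt_div_iff₀ hR0]; exact hN
    -- per-n threshold for small n
    have hδn : ∀ n : ℕ, ∃ δ > (0:ℝ), ∀ (M u : ℝ), |M - c| ≤ R → u ≤ 1 →
        1 - δ < u → qfR c d n M u ∈ W := by
      intro n
      obtain ⟨εn, hεn, hballn⟩ := Metric.isOpen_iff.1 hW _ (hptW n)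
      set D : ℝ := 2 ^ (n+1) * (2 * R) with hD
      have hD0 : 0 < D := by positivity
      refine ⟨εn / (D + 1), by positivity, fun M u hM hu1 hu2 => ?_⟩
      have hb := qfR_close_pt (c := c) (d := d) (R := R) (n := n) (M := M) (t := u)
        hd.le hdR hR0.le hM hu1
      apply hballn
      simp only [Metric.mem_ball, Real.dist_eq]
      have h1 : 1 - u < εn / (D + 1) := by linarith
      have h2 : 2 ^ (n+1) * (1 - u) * (2 * R) < D * (εn / (D + 1)) := by
        have h3 : (0:ℝ) ≤ 1 - u := by linarith
        calc 2 ^ (n+1) * (1 - u) * (2 * R) = D * (1 - u) := by rw [hD]; ring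
          _ < D * (εn / (D + 1)) := by
              apply mul_lt_mul_of_pos_left h1 hD0
      have h4 : D * (εn / (D + 1)) < εn := by
        rw [mul_div_assoc']
        rw [div_lt_iff₀ (by positivity : (0:ℝ) < D + 1)]
        nlinarith
      linarith
    choose δf hδfpos hδfW using hδn
    set δφ : ℝ := ε / (R + 1) with hδφ
    have hδφ0 : 0 < δφ := by positivity
    refine ⟨((fun w : ↥(Sc ↥s) × unitInterval => (↑w.2 : ℝ)) ⁻¹' Ioi (1 - δφ))
        ∩ ⋂ n ∈ Finset.range N,
          ((fun w : ↥(Sc ↥s) × unitInterval => (↑w.2 : ℝ)) ⁻¹' Ioi (1 - δf n)),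
        ?_, ?_, ?_⟩
    · rintro ⟨z, t⟩ ⟨htφ, htq⟩
      simp only [mem_preimage, mem_Ioi] at htφ
      simp only [mem_setOf_eq]
      rintro x (⟨y, hy, rfl⟩ | hx)
      · apply hball
        simp only [Metric.mem_ball, Real.dist_eq]
        have hyR : |y - c| ≤ R := hRs _ (KofZ_subset _ hy)
        have hb := phiR_close_c (t := (↑t:ℝ)) hyR t.2.1 t.2.2
        have h5 : (1 - (↑t:ℝ)) * R < δφ * R := by
          apply mul_lt_mul_of_pos_right (by linarith) hR0
        have h6 : δφ * R < ε := by
          rw [hδφ, div_mul_eq_mul_div, div_lt_iff₀ (by positivity : (0:ℝ) < R + 1)]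
          nlinarith
        linarith
      · obtain ⟨n, htn, rfl⟩ := mem_iUnion.1 hx
        by_cases hnN : n < N
        · have := mem_iInter.1 (mem_iInter.1 htq n) (Finset.mem_range.2 hnN)
          simp only [mem_preimage, mem_Ioi] at this
          exact hδfW n _ _ (hMR z) t.2.2 this
        · push_neg at hnN
          apply hball
          simp only [Metric.mem_ball, Real.dist_eq]
          have hb := qfR_close_c (c := c) (d := d) (R := R) (n := n)
            hd.le hdR (hMR z) htn t.2.2
          have h7 : (2:ℝ)⁻¹ ^ (n+1) ≤ (2:ℝ)⁻¹ ^ N :=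
            pow_le_pow_of_le_one (by norm_num) (by norm_num) (by omega)
          have h8 : (2:ℝ)⁻¹ ^ (n+1) * R ≤ (2:ℝ)⁻¹ ^ N * R :=
            mul_le_mul_of_nonneg_right h7 hR0.le
          linarith
    · refine IsOpen.inter (isOpen_Ioi.preimage continuous_tw) ?_
      exact isOpen_biInter_finset fun n _ => isOpen_Ioi.preimage continuous_tw
    · constructor
      · simp only [mem_preimage, mem_Ioi, ht₀]
        linarith
      · refine mem_iInter.2 fun n => mem_iInter.2 fun _ => ?_
        simp only [mem_preimage, mem_Ioi, ht₀]
        linarith [hδfpos n]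

end Upper
section Assemble

variable {s : Set ℝ} {c d R : ℝ}

/-- the contraction, as a map into `CL ↥s` -/
noncomputable def hmapCL (s : Set ℝ) (c d : ℝ) (hd : 0 < d) (hconv : Convex ℝ s)
    (hcs : c ∈ s) (hIcc : Icc c (c + d) ⊆ s)
    (w : ↥(Sc ↥s) × unitInterval) : CL ↥s where
  carrier := Subtype.val ⁻¹' (HHR c d (KofZ w.1.1) ↑w.2)
  isClosed' := by
    obtain ⟨p, hps, hp⟩ := KofZ_limit w.1.2
    exact preimage_isClosed _ (HHR_isLimitOf hd (KofZ_nonempty _) hp w.2.2.2)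
  nonempty' := by
    refine preimage_nonempty ?_ (HHR_nonempty (KofZ_nonempty _))
    exact HHR_subset hd hconv hcs hIcc (KofZ_subset _) (KofZ_sSup_mem w.1.2)
      w.2.2.1 w.2.2.2

lemma hmapCL_mem_Sc (hd : 0 < d) (hconv : Convex ℝ s) (hcs : c ∈ s)
    (hIcc : Icc c (c + d) ⊆ s) (w : ↥(Sc ↥s) × unitInterval) :
    hmapCL s c d hd hconv hcs hIcc w ∈ Sc ↥s := by
  obtain ⟨p, hps, hp⟩ := KofZ_limit w.1.2
  refine preimage_isNCS
    (HHR_subset hd hconv hcs hIcc (KofZ_subset _) (KofZ_sSup_mem w.1.2) w.2.2.1 w.2.2.2)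
    (HHR_countable (KofZ_countable w.1.2))
    (HHR_infinite hd (KofZ_infinite w.1.2) w.2.2.2)
    (q := phiR c ↑w.2 p)
    (phiR_mem hconv hcs hps w.2.2.1 w.2.2.2)
    (HHR_isLimitOf hd (KofZ_nonempty _) hp w.2.2.2)

lemma isOpen_hmapCL_upper (hd : 0 < d) (hR0 : 0 < R) (hdR : d ≤ R)
    (hbd : BddAbove s) (hRs : ∀ x ∈ s, |x - c| ≤ R)
    (hconv : Convex ℝ s) (hcs : c ∈ s) (hIcc : Icc c (c + d) ⊆ s)
    {V : Set ↥s} (hV : IsOpen V) :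
    IsOpen {w : ↥(Sc ↥s) × unitInterval |
      (hmapCL s c d hd hconv hcs hIcc w).carrier ⊆ V} := by
  obtain ⟨V', hV', rfl⟩ := isOpen_induced_iff.1 hV
  have heq : {w : ↥(Sc ↥s) × unitInterval |
      (hmapCL s c d hd hconv hcs hIcc w).carrier ⊆ Subtype.val ⁻¹' V'}
      = {w : ↥(Sc ↥s) × unitInterval | HHR c d (KofZ w.1.1) ↑w.2 ⊆ V'} := by
    ext w
    simp only [mem_setOf_eq, hmapCL]
    constructor
    · intro h x hx
      have hxs : x ∈ s := HHR_subset hd hconv hcs hIcc (KofZ_subset _)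
        (KofZ_sSup_mem w.1.2) w.2.2.1 w.2.2.2 hx
      exact h (show (⟨x, hxs⟩ : ↥s) ∈ _ from hx)
    · intro h x hx
      exact h hx
  rw [heq]
  exact isOpen_upperHH hd hR0 hdR hbd hRs hV'

lemma isOpen_hmapCL_lower (hd : 0 < d) (hbd : BddAbove s)
    (hconv : Convex ℝ s) (hcs : c ∈ s) (hIcc : Icc c (c + d) ⊆ s)
    {U : Set ↥s} (hU : IsOpen U) :
    IsOpen {w : ↥(Sc ↥s) × unitInterval |
      ((hmapCL s c d hd hconv hcs hIcc w).carrier ∩ U).Nonempty} := by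
  obtain ⟨U', hU', rfl⟩ := isOpen_induced_iff.1 hU
  have heq : {w : ↥(Sc ↥s) × unitInterval |
      ((hmapCL s c d hd hconv hcs hIcc w).carrier ∩ Subtype.val ⁻¹' U').Nonempty}
      = {w : ↥(Sc ↥s) × unitInterval |
          (HHR c d (KofZ w.1.1) ↑w.2 ∩ U').Nonempty} := by
    ext w
    simp only [mem_setOf_eq, hmapCL]
    constructor
    · rintro ⟨y, hy1, hy2⟩
      exact ⟨↑y, hy1, hy2⟩
    · rintro ⟨x, hx1, hx2⟩
      have hxs : x ∈ s := HHR_subset hd hconv hcs hIcc (KofZ_subset _)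
        (KofZ_sSup_mem w.1.2) w.2.2.1 w.2.2.2 hx1
      exact ⟨⟨x, hxs⟩, hx1, hx2⟩
  rw [heq]
  exact isOpen_lowerHH hbd hU'

lemma continuous_hmapCL (hd : 0 < d) (hR0 : 0 < R) (hdR : d ≤ R)
    (hbd : BddAbove s) (hRs : ∀ x ∈ s, |x - c| ≤ R)
    (hconv : Convex ℝ s) (hcs : c ∈ s) (hIcc : Icc c (c + d) ⊆ s) :
    Continuous (hmapCL s c d hd hconv hcs hIcc) := by
  apply continuous_generateFrom_iff.2
  rintro S ⟨𝒰, h𝒰, rfl⟩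
  have heq : hmapCL s c d hd hconv hcs hIcc ⁻¹' CL.box 𝒰
      = {w | (hmapCL s c d hd hconv hcs hIcc w).carrier ⊆ ⋃₀ (𝒰 : Set (Set ↥s))}
        ∩ ⋂ U ∈ 𝒰, {w | ((hmapCL s c d hd hconv hcs hIcc w).carrier ∩ U).Nonempty} := by
    ext w
    simp only [mem_preimage, CL.box, mem_setOf_eq, mem_inter_iff, mem_iInter]
  rw [heq]
  refine IsOpen.inter ?_ ?_
  · refine isOpen_hmapCL_upper hd hR0 hdR hbd hRs hconv hcs hIcc ?_
    exact isOpen_sUnion fun U hU => h𝒰 U (by simpa using hU)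
  · exact isOpen_biInter_finset fun U hU =>
      isOpen_hmapCL_lower hd hbd hconv hcs hIcc (h𝒰 U hU)

lemma hmapCL_zero (hd : 0 < d) (hconv : Convex ℝ s) (hcs : c ∈ s)
    (hIcc : Icc c (c + d) ⊆ s) (z : ↥(Sc ↥s)) :
    hmapCL s c d hd hconv hcs hIcc (z, 0) = z.1 := by
  apply CL.ext'
  show Subtype.val ⁻¹' (HHR c d (KofZ z.1) ↑(0 : unitInterval)) = z.1.carrier
  have h0 : ((0 : unitInterval) : ℝ) = 0 := rfl
  rw [h0, HHR_zero, KofZ, preimage_image_eq _ Subtype.val_injective]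

lemma hmapCL_one (hd : 0 < d) (hconv : Convex ℝ s) (hcs : c ∈ s)
    (hIcc : Icc c (c + d) ⊆ s) (z : ↥(Sc ↥s)) :
    (hmapCL s c d hd hconv hcs hIcc (z, 1)).carrier
      = Subtype.val ⁻¹' ({c} ∪ range (ptR c d)) := by
  show Subtype.val ⁻¹' (HHR c d (KofZ z.1) ↑(1 : unitInterval)) = _
  have h1 : ((1 : unitInterval) : ℝ) = 1 := rfl
  rw [h1, HHR_one c d (KofZ_nonempty _)]

end Assemble
/-- If `X` is a subspace of `ℝ` of the form `(a,b)`, `(a,b]` or `[a,b]` with `a < b`,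
then `S_c(X)` is contractible: there exist a point `P` of `S_c(X)` and a continuous
`h : S_c(X) × [0,1] → S_c(X)` with `h(z,0) = z` and `h(z,1) = P`. -/
theorem stmt_16 (a b : ℝ) (hab : a < b) (s : Set ℝ)
    (hs : s = Set.Ioo a b ∨ s = Set.Ioc a b ∨ s = Set.Icc a b) :
    ∃ (P : (Sc s : Set (CL s)))
      (h : C(((Sc s : Set (CL s))) × unitInterval, (Sc s : Set (CL s)))),
      (∀ z, h (z, 0) = z) ∧ ∀ z, h (z, 1) = P := by
  set c : ℝ := (a + b) / 2 with hcdef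
  set d : ℝ := (b - a) / 4 with hddef
  set R : ℝ := (b - a) / 2 with hRdef
  have hd : 0 < d := by rw [hddef]; linarith
  have hR0 : 0 < R := by rw [hRdef]; linarith
  have hdR : d ≤ R := by rw [hddef, hRdef]; linarith
  have hIoo : Ioo a b ⊆ s := by
    rcases hs with rfl | rfl | rfl
    · exact subset_rfl
    · exact Ioo_subset_Ioc_self
    · exact Ioo_subset_Icc_self
  have hsub : s ⊆ Icc a b := by
    rcases hs with rfl | rfl | rfl
    · exact Ioo_subset_Icc_self
    · exact Ioc_subset_Icc_self
    · exact subset_rfl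
  have hconv : Convex ℝ s := by
    rcases hs with rfl | rfl | rfl
    exacts [convex_Ioo a b, convex_Ioc a b, convex_Icc a b]
  have hcs : c ∈ s := hIoo ⟨by rw [hcdef]; linarith, by rw [hcdef]; linarith⟩
  have hIcc : Icc c (c + d) ⊆ s := by
    intro x hx
    obtain ⟨h1, h2⟩ := hx
    refine hIoo ⟨?_, ?_⟩
    · have : a < c := by rw [hcdef]; linarith
      linarith
    · have : c + d < b := by rw [hcdef, hddef]; linarith
      linarith
  have hbd : BddAbove s := ⟨b, fun x hx => (hsub hx).2⟩
  have hRs : ∀ x ∈ s, |x - c| ≤ R := by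
    intro x hx
    obtain ⟨h1, h2⟩ := hsub hx
    rw [abs_le, hcdef, hRdef]
    constructor <;> linarith
  have hPs : {c} ∪ range (ptR c d) ⊆ s := by
    rintro x (hx | ⟨n, rfl⟩)
    · rw [mem_singleton_iff] at hx
      exact hx ▸ hcs
    · exact ptR_mem hd hIcc
  have hPlim := isLimitOf_P (c := c) hd
  have hPcnt : ({c} ∪ range (ptR c d)).Countable :=
    (countable_singleton c).union (countable_range _)
  have hPinf : ({c} ∪ range (ptR c d)).Infinite :=
    (infinite_range_of_injective (ptR_injective hd)).mono subset_union_right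
  refine ⟨⟨⟨Subtype.val ⁻¹' ({c} ∪ range (ptR c d)), preimage_isClosed c hPlim,
      preimage_nonempty hPs ⟨c, Or.inl rfl⟩⟩,
      preimage_isNCS hPs hPcnt hPinf hcs hPlim⟩,
    ⟨fun w => ⟨hmapCL s c d hd hconv hcs hIcc w, hmapCL_mem_Sc hd hconv hcs hIcc w⟩,
     (continuous_hmapCL hd hR0 hdR hbd hRs hconv hcs hIcc).subtype_mk _⟩, ?_, ?_⟩
  · intro z
    apply Subtype.ext
    exact hmapCL_zero hd hconv hcs hIcc z
  · intro z
    apply Subtype.ext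
    apply CL.ext'
    exact hmapCL_one hd hconv hcs hIcc z
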